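/- Let F ⊆ ℝ^d be compact and suppose there exists an integer k > 1 such that for every x ∈ F and every R ∈ (0,1), the axis-parallel closed cube Q(x,R) of side length R centred at x contains two cubes with disjoint interiors, each of side length 2^{-k}R and each centred at a point of F ∩ Q(x,R). Then the lower dimension of F satisfies dim_L F ≥ 1/k. -/

import Mathlib

/-!
Fix `s < 1/k`, let `b = 2^{-k}` and `β = 2^{-1/s} < b`, so that `2 β^s = 1`. By induction on the
scale, `N_r(F ∩ B(x,τ)) ≥ (τ/L)^s` with `L ≍ r`: every ball `B(x,τ)` is split into two
`r`-separated subballs whose radii have `s`-th powers adding up to at least `τ^s`.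
Iterating the hypothesis naively loses a constant factor per generation, because the two cubes
it provides stick out of `B(x,τ)`. Instead, if `F` has a point `p` in the thin ring
`τ(1 - b(1-ε)) < |p - x| ≤ τ(1-ε)`, split `B(x,τ)` into a concentric ball and a small ball
around `p` (concavity of `t ↦ t^s`, `s ≤ 1/2`, pays for this); otherwise the pair given by the
hypothesis at scale `2τ(1-ε)` lies deep inside `B(x,τ)` and balls of radius `≥ βτ` around it fit.
-/

open Set Metric Filter Topology

/-- Smallest number of axis-parallel cubes of side length `r` (closed balls of radius `r/2`
in the sup metric on `Fin d → ℝ`) needed to cover `A`. -/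
noncomputable def coverNum (d : ℕ) (A : Set (Fin d → ℝ)) (r : ℝ) : ℕ :=
  sInf {n : ℕ | ∃ t : Finset (Fin d → ℝ), t.card = n ∧ A ⊆ ⋃ x ∈ t, closedBall x (r / 2)}

/-- The lower dimension. -/
noncomputable def lowerDim (d : ℕ) (F : Set (Fin d → ℝ)) : ℝ :=
  sSup {s : ℝ | 0 ≤ s ∧ ∃ C : ℝ, 0 < C ∧ ∀ R : ℝ, 0 < R → R < 1 → ∀ r : ℝ, 0 < r → r < R →
    ∀ x ∈ F, C * (R / r) ^ s ≤ (coverNum d (closedBall x R ∩ F) r : ℝ)}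

/-- The Assouad dimension. -/
noncomputable def assouadDim (d : ℕ) (F : Set (Fin d → ℝ)) : ℝ :=
  sInf {s : ℝ | 0 ≤ s ∧ ∃ C : ℝ, 0 < C ∧ ∀ R : ℝ, 0 < R → ∀ r : ℝ, 0 < r → r < R →
    ∀ x ∈ F, (coverNum d (closedBall x R ∩ F) r : ℝ) ≤ C * (R / r) ^ s}

/-- Upper box dimension. -/
noncomputable def ubDim (d : ℕ) (A : Set (Fin d → ℝ)) : ℝ :=
  Filter.limsup (fun r : ℝ => Real.log (coverNum d A r) / (-Real.log r)) (𝓝[>] (0:ℝ))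

/-- Lower box dimension. -/
noncomputable def lbDim (d : ℕ) (A : Set (Fin d → ℝ)) : ℝ :=
  Filter.liminf (fun r : ℝ => Real.log (coverNum d A r) / (-Real.log r)) (𝓝[>] (0:ℝ))

/-- `D` is a miniset of `F`: `D = (λF + t) ∩ [0,1]^d` with `λ ≥ 1`, and `D` is nonempty. -/
def IsMiniset (d : ℕ) (F D : Set (Fin d → ℝ)) : Prop :=
  ∃ lam : ℝ, 1 ≤ lam ∧ ∃ t : Fin d → ℝ,
    D = ((fun x => lam • x + t) '' F) ∩ Icc 0 1 ∧ D.Nonempty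

/-- `E` is a microset of `F`: a Hausdorff-metric limit of minisets of `F`. -/
def IsMicroset (d : ℕ) (F E : Set (Fin d → ℝ)) : Prop :=
  IsCompact E ∧ E ⊆ Icc 0 1 ∧ ∃ D : ℕ → Set (Fin d → ℝ),
    (∀ n, IsMiniset d F (D n)) ∧
    Tendsto (fun n => hausdorffDist (D n) E) atTop (𝓝 0)

/-- The gallery of `F`: microsets intersecting the interior of the unit cube. -/
def InGallery (d : ℕ) (F E : Set (Fin d → ℝ)) : Prop :=
  IsMicroset d F E ∧ (E ∩ interior (Icc (0 : Fin d → ℝ) 1)).Nonempty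

section coverNum

variable {d : ℕ} {A B : Set (Fin d → ℝ)} {r : ℝ}

lemma coverNum_le_card (t : Finset (Fin d → ℝ)) (h : A ⊆ ⋃ x ∈ t, closedBall x (r / 2)) :
    coverNum d A r ≤ t.card :=
  Nat.sInf_le ⟨t, rfl, h⟩

lemma exists_finset_cover (hA : Bornology.IsBounded A) (hr : 0 < r) :
    ∃ t : Finset (Fin d → ℝ), A ⊆ ⋃ x ∈ t, closedBall x (r / 2) := by
  obtain ⟨t, -, ht, hcov⟩ := finite_cover_balls_of_compact hA.isCompact_closure (half_pos hr)
  refine ⟨ht.toFinset, fun p hp => ?_⟩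
  obtain ⟨x, hx, hpx⟩ := mem_iUnion₂.1 (hcov (subset_closure hp))
  exact mem_iUnion₂.2 ⟨x, ht.mem_toFinset.2 hx, ball_subset_closedBall hpx⟩

lemma exists_card_eq_coverNum (hA : Bornology.IsBounded A) (hr : 0 < r) :
    ∃ t : Finset (Fin d → ℝ), t.card = coverNum d A r ∧ A ⊆ ⋃ x ∈ t, closedBall x (r / 2) := by
  obtain ⟨t, ht⟩ := exists_finset_cover hA hr
  exact Nat.sInf_mem (s := {n | ∃ t : Finset (Fin d → ℝ), t.card = n ∧ _}) ⟨t.card, t, rfl, ht⟩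

lemma one_le_coverNum (hA : A.Nonempty) (hA' : Bornology.IsBounded A) (hr : 0 < r) :
    1 ≤ coverNum d A r := by
  obtain ⟨t, ht, hcov⟩ := exists_card_eq_coverNum hA' hr
  obtain ⟨a, ha⟩ := hA
  obtain ⟨x, hx, -⟩ := mem_iUnion₂.1 (hcov ha)
  exact ht ▸ Finset.card_pos.2 ⟨x, hx⟩

lemma coverNum_mono (hAB : A ⊆ B) (hB : Bornology.IsBounded B) (hr : 0 < r) :
    coverNum d A r ≤ coverNum d B r := by
  obtain ⟨t, ht, hcov⟩ := exists_card_eq_coverNum hB hr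
  exact ht ▸ coverNum_le_card t (hAB.trans hcov)

/-- No cube of side `r` meets two sets that are more than `r` apart, so an optimal cover of `A`
splits into covers of `A₁` and `A₂`. -/
lemma coverNum_add_le_of_separated {A₁ A₂ : Set (Fin d → ℝ)} (h₁ : A₁ ⊆ A) (h₂ : A₂ ⊆ A)
    (hsep : ∀ p ∈ A₁, ∀ q ∈ A₂, r < dist p q) (hA : Bornology.IsBounded A) (hr : 0 < r) :
    coverNum d A₁ r + coverNum d A₂ r ≤ coverNum d A r := by
  classical
  obtain ⟨t, ht, hcov⟩ := exists_card_eq_coverNum hA hr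
  let meets₁ : (Fin d → ℝ) → Prop := fun y => ∃ p ∈ A₁, p ∈ closedBall y (r / 2)
  have hcov₁ : A₁ ⊆ ⋃ y ∈ t.filter meets₁, closedBall y (r / 2) := fun p hp => by
    obtain ⟨y, hy, hpy⟩ := mem_iUnion₂.1 (hcov (h₁ hp))
    exact mem_iUnion₂.2 ⟨y, Finset.mem_filter.2 ⟨hy, p, hp, hpy⟩, hpy⟩
  have hcov₂ : A₂ ⊆ ⋃ y ∈ t.filter (¬ meets₁ ·), closedBall y (r / 2) := fun q hq => by
    obtain ⟨y, hy, hqy⟩ := mem_iUnion₂.1 (hcov (h₂ hq))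
    refine mem_iUnion₂.2 ⟨y, Finset.mem_filter.2 ⟨hy, ?_⟩, hqy⟩
    rintro ⟨p, hp, hpy⟩
    have := dist_triangle_right p q y
    linarith [hsep p hp q hq, mem_closedBall.1 hpy, mem_closedBall.1 hqy]
  calc coverNum d A₁ r + coverNum d A₂ r
      ≤ (t.filter meets₁).card + (t.filter (¬ meets₁ ·)).card :=
        add_le_add (coverNum_le_card _ hcov₁) (coverNum_le_card _ hcov₂)
    _ = coverNum d A r := by rw [Finset.card_filter_add_card_filter_not, ht]

lemma exists_cover_closedBall_half (c : Fin d → ℝ) (ρ : ℝ) :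
    ∃ t : Finset (Fin d → ℝ), t.card ≤ 2 ^ d ∧ closedBall c ρ ⊆ ⋃ y ∈ t, closedBall y (ρ / 2) := by
  classical
  let corner : (Fin d → Bool) → Fin d → ℝ := fun e j => c j + if e j then ρ / 2 else -(ρ / 2)
  refine ⟨Finset.univ.image corner, Finset.card_image_le.trans (by simp), fun p hp => ?_⟩
  have hρ : 0 ≤ ρ := dist_nonneg.trans hp
  refine mem_iUnion₂.2 ⟨corner fun j => decide (c j ≤ p j), Finset.mem_image_of_mem _ (by simp), ?_⟩
  rw [mem_closedBall, dist_pi_le_iff (by positivity)]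
  intro j
  have hj := abs_le.1 ((Real.dist_eq _ _).symm.trans_le ((dist_le_pi_dist p c j).trans hp))
  rw [Real.dist_eq, abs_le]
  by_cases h : c j ≤ p j <;> simp only [corner, h, decide_true, decide_false] <;>
    constructor <;> simp <;> linarith

lemma exists_cover_closedBall_div_pow (j : ℕ) (c : Fin d → ℝ) (ρ : ℝ) :
    ∃ t : Finset (Fin d → ℝ), t.card ≤ 2 ^ (d * j) ∧
      closedBall c ρ ⊆ ⋃ y ∈ t, closedBall y (ρ / 2 ^ j) := by
  classical
  induction j generalizing c ρ with
  | zero => exact ⟨{c}, by simp, by simp⟩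
  | succ j ih =>
    obtain ⟨t, ht, hcov⟩ := exists_cover_closedBall_half c ρ
    choose T hT hTcov using fun y : Fin d → ℝ => ih y (ρ / 2)
    refine ⟨t.biUnion T, ?_, fun p hp => ?_⟩
    · calc (t.biUnion T).card ≤ ∑ y ∈ t, (T y).card := Finset.card_biUnion_le
        _ ≤ ∑ _y ∈ t, 2 ^ (d * j) := Finset.sum_le_sum fun y _ => hT y
        _ ≤ 2 ^ d * 2 ^ (d * j) := by rw [Finset.sum_const, smul_eq_mul]; gcongr
        _ = 2 ^ (d * (j + 1)) := by ring
    · obtain ⟨y, hy, hpy⟩ := mem_iUnion₂.1 (hcov hp)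
      obtain ⟨z, hz, hpz⟩ := mem_iUnion₂.1 (hTcov y hpy)
      refine mem_iUnion₂.2 ⟨z, Finset.mem_biUnion.2 ⟨y, hy, hz⟩, ?_⟩
      rwa [pow_succ', ← div_div]

end coverNum

section lowerDim

variable {d : ℕ} {F : Set (Fin d → ℝ)}

/-- Compare the lower bound at `R = 1/2`, `r = 2^{-(n+2)}` with the dyadic bound `2^{d(n+2)}`. -/
lemma le_of_coverNum_lower_bound (hne : F.Nonempty) {s C : ℝ} (hC : 0 < C)
    (h : ∀ R : ℝ, 0 < R → R < 1 → ∀ r : ℝ, 0 < r → r < R →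
      ∀ x ∈ F, C * (R / r) ^ s ≤ (coverNum d (closedBall x R ∩ F) r : ℝ)) :
    s ≤ d := by
  obtain ⟨x, hx⟩ := hne
  by_contra! hds
  have hq : 1 < (2 : ℝ) ^ (s - d) := Real.one_lt_rpow one_lt_two (sub_pos.2 hds)
  obtain ⟨n, hn⟩ := pow_unbounded_of_one_lt (2 ^ d / C) hq
  set Y : ℝ := 2 ^ (n + 1) with hY
  have hY0 : 0 < Y := by positivity
  obtain ⟨t, ht, hcov⟩ := exists_cover_closedBall_div_pow (n + 2) x (1 / 2)
  have hradius : 1 / 2 / Y / 2 = 1 / 2 / 2 ^ (n + 2) := by rw [hY]; ring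
  have hupper : (coverNum d (closedBall x (1 / 2) ∩ F) (1 / 2 / Y) : ℝ) ≤ 2 ^ d * Y ^ (d : ℝ) := by
    have : (coverNum d (closedBall x (1 / 2) ∩ F) (1 / 2 / Y) : ℝ) ≤ 2 ^ (d * (n + 2)) := by
      exact_mod_cast (coverNum_le_card t (inter_subset_left.trans (hradius ▸ hcov))).trans ht
    rwa [Real.rpow_natCast, hY, ← mul_pow, ← pow_succ', ← pow_mul, mul_comm]
  have hlower := h (1 / 2) (by norm_num) (by norm_num) (1 / 2 / Y) (by positivity)
    (div_lt_self (by norm_num) (by rw [hY]; exact one_lt_pow₀ one_lt_two n.succ_ne_zero)) x hx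
  have hsplit : ((1 / 2) / (1 / 2 / Y)) ^ s = Y ^ (d : ℝ) * ((2 : ℝ) ^ (s - d)) ^ (n + 1) := by
    rw [div_div_cancel₀ (by norm_num), ← add_sub_cancel (d : ℝ) s, Real.rpow_add hY0,
      add_sub_cancel_left, Real.rpow_pow_comm zero_le_two, ← hY]
  rw [hsplit] at hlower
  have hbound : C * ((2 : ℝ) ^ (s - d)) ^ (n + 1) ≤ 2 ^ d := by
    have := hlower.trans hupper
    nlinarith [Real.rpow_pos_of_pos hY0 (d : ℝ)]
  have := hn.trans_le (pow_le_pow_right₀ hq.le (Nat.le_add_right n 1))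
  rw [div_lt_iff₀' hC] at this
  linarith

lemma le_lowerDim_of_forall_lt (hne : F.Nonempty) {a : ℝ} (ha : 0 < a)
    (h : ∀ s : ℝ, 0 < s → s < a → ∃ C : ℝ, 0 < C ∧ ∀ R : ℝ, 0 < R → R < 1 → ∀ r : ℝ, 0 < r → r < R →
      ∀ x ∈ F, C * (R / r) ^ s ≤ (coverNum d (closedBall x R ∩ F) r : ℝ)) :
    a ≤ lowerDim d F := by
  have hbdd : BddAbove {s : ℝ | 0 ≤ s ∧ ∃ C : ℝ, 0 < C ∧ ∀ R : ℝ, 0 < R → R < 1 →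
      ∀ r : ℝ, 0 < r → r < R →
      ∀ x ∈ F, C * (R / r) ^ s ≤ (coverNum d (closedBall x R ∩ F) r : ℝ)} :=
    ⟨d, fun s ⟨_, C, hC, hs⟩ => le_of_coverNum_lower_bound hne hC hs⟩
  refine le_of_forall_lt fun c hc => ?_
  obtain ⟨s, hcs, hsa⟩ := exists_between (max_lt hc ha)
  have hs0 : 0 < s := (le_max_right c 0).trans_lt hcs
  exact ((le_max_left c 0).trans_lt hcs).trans_le (le_csSup hbdd ⟨hs0.le, h s hs0 hsa⟩)

end lowerDim

lemma sqrt_le_rpow_of_le_half {a s : ℝ} (ha0 : 0 ≤ a) (ha1 : a ≤ 1) (hs0 : 0 ≤ s) (hs : s ≤ 1 / 2) :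
    √a ≤ a ^ s :=
  Real.sqrt_eq_rpow a ▸ Real.rpow_le_rpow_of_exponent_ge' ha0 ha1 hs0 hs

/-- Both square roots are compared with `3u/2`: `√(1 - 2u) ≥ 1 - 3u/2` and `√(u - μ) ≥ 3u/2`. -/
lemma one_le_rpow_one_sub_add_rpow_sub {s u μ : ℝ} (hs0 : 0 ≤ s) (hs : s ≤ 1 / 2)
    (hu0 : 0 ≤ u) (hu : u ≤ 1 / 4) (hμ0 : 0 ≤ μ) (hμ : 4 * μ ≤ u) :
    1 ≤ (1 - 2 * u) ^ s + (u - μ) ^ s := by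
  have h₁ : 1 - 3 / 2 * u ≤ √(1 - 2 * u) :=
    (Real.le_sqrt (by linarith) (by linarith)).2 (by nlinarith)
  have h₂ : 3 / 2 * u ≤ √(u - μ) :=
    (Real.le_sqrt (by linarith) (by linarith)).2 (by nlinarith)
  linarith [sqrt_le_rpow_of_le_half (a := 1 - 2 * u) (by linarith) (by linarith) hs0 hs,
    sqrt_le_rpow_of_le_half (a := u - μ) (by linarith) (by linarith) hs0 hs]

lemma rpow_le_rpow_sub_add_rpow_sub {s τ δ μ : ℝ} (hs0 : 0 ≤ s) (hs : s ≤ 1 / 2)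
    (hδ0 : 0 ≤ δ) (hδ : 4 * δ ≤ τ) (hτ : 0 < τ) (hμ0 : 0 ≤ μ) (hμ : 4 * μ ≤ δ) :
    τ ^ s ≤ (τ - 2 * δ) ^ s + (δ - μ) ^ s := by
  have key := one_le_rpow_one_sub_add_rpow_sub hs0 hs (div_nonneg hδ0 hτ.le)
    (by rw [div_le_iff₀ hτ]; linarith) (div_nonneg hμ0 hτ.le)
    (by rw [← mul_div_assoc]; exact div_le_div_of_nonneg_right hμ hτ.le)
  have hτs : 0 < τ ^ s := Real.rpow_pos_of_pos hτ s
  calc τ ^ s ≤ τ ^ s * ((1 - 2 * (δ / τ)) ^ s + (δ / τ - μ / τ) ^ s) :=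
        le_mul_of_one_le_right hτs.le key
    _ = (τ - 2 * δ) ^ s + (δ - μ) ^ s := by
      have h₁ : 0 ≤ 1 - 2 * (δ / τ) := by rw [sub_nonneg, mul_div_assoc', div_le_one hτ]; linarith
      have h₂ : 0 ≤ δ / τ - μ / τ := by
        rw [sub_nonneg]; exact div_le_div_of_nonneg_right (by linarith) hτ.le
      rw [mul_add, ← Real.mul_rpow hτ.le h₁, ← Real.mul_rpow hτ.le h₂]
      congr 2 <;> field_simp

def AdmitsSplit {X : Type*} (S : Set X) (N : X → ℝ → ℝ) (s γ : ℝ) (x : X) (τ : ℝ) : Prop :=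
  ∃ x₁ ∈ S, ∃ x₂ ∈ S, ∃ τ₁ τ₂ : ℝ, 0 < τ₁ ∧ 0 < τ₂ ∧ τ₁ ≤ γ * τ ∧ τ₂ ≤ γ * τ ∧
    τ ^ s ≤ τ₁ ^ s + τ₂ ^ s ∧ N x₁ τ₁ + N x₂ τ₂ ≤ N x τ

theorem rpow_le_mul_of_forall_split {X : Type*} {S : Set X} {N : X → ℝ → ℝ} {s γ L T : ℝ}
    (hs : 0 ≤ s) (hγ0 : 0 < γ) (hγ1 : γ < 1) (hL : 0 < L)
    (base : ∀ x ∈ S, ∀ τ, 0 < τ → τ ≤ L → 1 ≤ N x τ)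
    (step : ∀ x ∈ S, ∀ τ, L < τ → τ < T → AdmitsSplit S N s γ x τ)
    {x : X} (hx : x ∈ S) {τ : ℝ} (hτ0 : 0 < τ) (hτT : τ < T) :
    τ ^ s ≤ L ^ s * N x τ := by
  have hbase : ∀ x ∈ S, ∀ τ, 0 < τ → τ ≤ L → τ ^ s ≤ L ^ s * N x τ := fun x hx τ hτ0 hτL =>
    (Real.rpow_le_rpow hτ0.le hτL hs).trans
      (le_mul_of_one_le_right (Real.rpow_nonneg hL.le s) (base x hx τ hτ0 hτL))
  suffices ∀ n : ℕ, ∀ x ∈ S, ∀ τ, 0 < τ → τ < T → γ ^ n * τ ≤ L → τ ^ s ≤ L ^ s * N x τ by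
    obtain ⟨n, hn⟩ := exists_pow_lt_of_lt_one (div_pos hL hτ0) hγ1
    exact this n x hx τ hτ0 hτT ((lt_div_iff₀ hτ0).1 hn).le
  intro n
  induction n with
  | zero => exact fun x hx τ hτ0 _ hτL => hbase x hx τ hτ0 (by simpa using hτL)
  | succ n ih =>
    intro x hx τ hτ0 hτT hτL
    rcases le_or_gt τ L with hτL' | hLτ
    · exact hbase x hx τ hτ0 hτL'
    obtain ⟨x₁, hx₁, x₂, hx₂, τ₁, τ₂, hτ₁, hτ₂, hτ₁γ, hτ₂γ, hpow, hN⟩ := step x hx τ hLτ hτT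
    have hγτ : γ * τ < τ := mul_lt_of_lt_one_left hτ0 hγ1
    have hchild : ∀ τ', τ' ≤ γ * τ → γ ^ n * τ' ≤ L := fun τ' hτ' =>
      (mul_le_mul_of_nonneg_left hτ' (pow_nonneg hγ0.le n)).trans (by rwa [← mul_assoc, ← pow_succ])
    calc τ ^ s ≤ τ₁ ^ s + τ₂ ^ s := hpow
      _ ≤ L ^ s * N x₁ τ₁ + L ^ s * N x₂ τ₂ :=
        add_le_add (ih x₁ hx₁ τ₁ hτ₁ (by linarith) (hchild τ₁ hτ₁γ))
          (ih x₂ hx₂ τ₂ hτ₂ (by linarith) (hchild τ₂ hτ₂γ))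
      _ ≤ L ^ s * N x τ := by
        rw [← mul_add]; exact mul_le_mul_of_nonneg_left hN (Real.rpow_nonneg hL.le s)

section splitting

variable {d : ℕ} {F : Set (Fin d → ℝ)}

def SplitsAtRatio (F : Set (Fin d → ℝ)) (b : ℝ) : Prop :=
  ∀ x ∈ F, ∀ R : ℝ, 0 < R → R < 1 →
    ∃ y ∈ F ∩ closedBall x (R / 2), ∃ z ∈ F ∩ closedBall x (R / 2), b * R ≤ dist y z

lemma splitsAtRatio_of_disjoint_interior {k : ℕ}
    (h : ∀ x ∈ F, ∀ R : ℝ, 0 < R → R < 1 →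
      ∃ y ∈ F ∩ closedBall x (R / 2), ∃ z ∈ F ∩ closedBall x (R / 2),
        Disjoint (interior (closedBall y (R / 2 ^ k / 2)))
          (interior (closedBall z (R / 2 ^ k / 2)))) :
    SplitsAtRatio F ((1 / 2) ^ k) := by
  intro x hx R hR0 hR1
  obtain ⟨y, hy, z, hz, hdisj⟩ := h x hx R hR0 hR1
  have hρ : 0 < R / 2 ^ k / 2 := by positivity
  rw [interior_closedBall _ hρ.ne', interior_closedBall _ hρ.ne', disjoint_ball_ball_iff hρ hρ]
    at hdisj
  exact ⟨y, hy, z, hz, by rw [one_div_pow, one_div_mul_eq_div]; linarith⟩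

lemma coverNum_inter_closedBall_add_le {r τ τ₁ τ₂ : ℝ} {x y₁ y₂ : Fin d → ℝ} (hr : 0 < r)
    (h₁ : τ₁ + dist y₁ x ≤ τ) (h₂ : τ₂ + dist y₂ x ≤ τ) (hsep : τ₁ + τ₂ + r < dist y₁ y₂) :
    (coverNum d (F ∩ closedBall y₁ τ₁) r : ℝ) + coverNum d (F ∩ closedBall y₂ τ₂) r ≤
      coverNum d (F ∩ closedBall x τ) r := by
  have hsep' : ∀ p ∈ F ∩ closedBall y₁ τ₁, ∀ q ∈ F ∩ closedBall y₂ τ₂, r < dist p q := by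
    rintro p ⟨-, hp⟩ q ⟨-, hq⟩
    rw [mem_closedBall] at hp hq
    linarith [dist_triangle4 y₁ p q y₂, dist_comm y₁ p]
  exact_mod_cast coverNum_add_le_of_separated
    (inter_subset_inter_right F (closedBall_subset_closedBall' h₁))
    (inter_subset_inter_right F (closedBall_subset_closedBall' h₂)) hsep'
    (isBounded_closedBall.subset inter_subset_right) hr

variable {s γ r τ : ℝ} {x : Fin d → ℝ}

lemma admitsSplit_of_far_pair {β w : ℝ} {y z : Fin d → ℝ} (hs : 0 ≤ s) (hβ0 : 0 ≤ β)
    (hβ : 1 ≤ 2 * β ^ s) (hy : y ∈ F) (hz : z ∈ F) (hr : 0 < r) (hτ : 0 < τ) (hβw : β * τ ≤ w)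
    (hwγ : w ≤ γ * τ) (hyx : w + dist y x ≤ τ) (hzx : w + dist z x ≤ τ)
    (hyz : w + w + r < dist y z) (hw : 0 < w) :
    AdmitsSplit F (fun c ρ => coverNum d (F ∩ closedBall c ρ) r) s γ x τ := by
  refine ⟨y, hy, z, hz, w, w, hw, hw, hwγ, hwγ, ?_, coverNum_inter_closedBall_add_le hr hyx hzx hyz⟩
  calc τ ^ s ≤ 2 * β ^ s * τ ^ s := le_mul_of_one_le_left (Real.rpow_nonneg hτ.le s) hβ
    _ = 2 * (β * τ) ^ s := by rw [Real.mul_rpow hβ0 hτ.le, mul_assoc]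
    _ ≤ w ^ s + w ^ s := by rw [← two_mul]; gcongr

lemma admitsSplit_of_ring_point {ε : ℝ} {p : Fin d → ℝ} (hs0 : 0 ≤ s) (hs : s ≤ 1 / 2)
    (hx : x ∈ F) (hp : p ∈ F) (hr : 0 < r) (hrτ : 8 * r < ε * τ)
    (hpε : ε * τ ≤ τ - dist p x) (hp4 : 4 * (τ - dist p x) ≤ τ) :
    AdmitsSplit F (fun c ρ => coverNum d (F ∩ closedBall c ρ) r) s (1 - 2 * ε) x τ := by
  set δ := τ - dist p x
  have hτ : 0 < τ := by linarith
  refine ⟨x, hx, p, hp, τ - 2 * δ, δ - 2 * r, by linarith, by linarith, by linarith, by linarith,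
    rpow_le_rpow_sub_add_rpow_sub hs0 hs (by linarith) hp4 hτ (by linarith) (by linarith), ?_⟩
  exact coverNum_inter_closedBall_add_le hr (by rw [dist_self]; linarith) (by linarith)
    (by rw [dist_comm]; linarith)

lemma SplitsAtRatio.admitsSplit {b β ε : ℝ} (hF : SplitsAtRatio F b) (hb : b ≤ 1 / 4) (hs0 : 0 ≤ s)
    (hs : s ≤ 1 / 2) (hβ0 : 0 ≤ β) (hβ : 1 ≤ 2 * β ^ s) (hε : 0 < ε) (hεb : ε ≤ (b - β) / 2)
    (hx : x ∈ F) (hτ : τ < 1 / 2) (hr : 0 < r) (hrτ : 8 * r < ε * τ) :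
    AdmitsSplit F (fun c ρ => coverNum d (F ∩ closedBall c ρ) r) s (1 - 2 * ε) x τ := by
  have hτ0 : 0 < τ := pos_of_mul_pos_right (by linarith : 0 < ε * τ) hε.le
  have hετ : ε * τ ≤ (b - β) / 2 * τ := mul_le_mul_of_nonneg_right hεb hτ0.le
  have hbτ : b * τ ≤ 1 / 4 * τ := mul_le_mul_of_nonneg_right hb hτ0.le
  have hβτ : 0 ≤ β * τ := mul_nonneg hβ0 hτ0.le
  have hbετ : b * (ε * τ) ≤ 1 / 4 * (ε * τ) := mul_le_mul_of_nonneg_right hb (by positivity)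
  have hbετ₀ : 0 ≤ b * (ε * τ) := mul_nonneg (by linarith) (by positivity)
  by_cases hring : ∃ p ∈ F, τ * (1 - b * (1 - ε)) < dist p x ∧ dist p x ≤ τ * (1 - ε)
  · obtain ⟨p, hp, hp₁, hp₂⟩ := hring
    exact admitsSplit_of_ring_point hs0 hs hx hp hr hrτ (by linarith) (by linarith)
  push Not at hring
  obtain ⟨y, ⟨hy, hyx⟩, z, ⟨hz, hzx⟩, hyz⟩ :=
    hF x hx (2 * τ * (1 - ε)) (by nlinarith) (by nlinarith)
  rw [mem_closedBall] at hyx hzx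
  have hinner : ∀ q ∈ F, dist q x ≤ 2 * τ * (1 - ε) / 2 → dist q x ≤ τ * (1 - b * (1 - ε)) :=
    fun q hq hqx => not_lt.1 fun h => (hring q hq h).not_ge (by linarith)
  have hyx' := hinner y hy hyx
  have hzx' := hinner z hz hzx
  exact admitsSplit_of_far_pair (w := b * τ * (1 - ε) - r) hs0 hβ0 hβ hy hz hr hτ0
    (by linarith) (by linarith) (by linarith) (by linarith) (by linarith) (by linarith)

end splitting

theorem SplitsAtRatio.coverNum_lower_bound {d : ℕ} {F : Set (Fin d → ℝ)} {b s : ℝ}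
    (hF : SplitsAtRatio F b) (hb : b ≤ 1 / 4) (hs0 : 0 < s) (hs : s ≤ 1 / 2)
    (hsb : (1 / 2 : ℝ) ^ (1 / s) < b) :
    ∃ C : ℝ, 0 < C ∧ ∀ R : ℝ, 0 < R → R < 1 → ∀ r : ℝ, 0 < r → r < R →
      ∀ x ∈ F, C * (R / r) ^ s ≤ (coverNum d (closedBall x R ∩ F) r : ℝ) := by
  set β : ℝ := (1 / 2) ^ (1 / s)
  have hβ : 1 ≤ 2 * β ^ s := by
    rw [← Real.rpow_mul (by norm_num), one_div_mul_cancel hs0.ne', Real.rpow_one]; norm_num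
  set ε := (b - β) / 2
  have hε : 0 < ε := by simp only [ε]; linarith
  have hε8 : ε ≤ 1 / 8 := by simp only [ε]; linarith [show 0 ≤ β by positivity]
  refine ⟨(ε / 16) ^ s, by positivity, fun R hR0 hR1 r hr hrR x hx => ?_⟩
  have key := rpow_le_mul_of_forall_split (S := F) (T := 1 / 2)
    (N := fun y ρ => (coverNum d (F ∩ closedBall y ρ) r : ℝ)) hs0.le (γ := 1 - 2 * ε)
    (by linarith) (by linarith) (by positivity : 0 < 8 * r / ε)
    (fun y hy ρ hρ _ => by
      exact_mod_cast one_le_coverNum (A := F ∩ closedBall y ρ) ⟨y, hy, mem_closedBall_self hρ.le⟩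
        (isBounded_closedBall.subset inter_subset_right) hr)
    (fun y hy ρ hLρ hρ => hF.admitsSplit hb hs0.le hs (by positivity) hβ hε le_rfl hy hρ hr
      (by rw [div_lt_iff₀ hε] at hLρ; linarith))
    hx (τ := R / 2) (by positivity) (by linarith)
  calc (ε / 16) ^ s * (R / r) ^ s = (R / 2) ^ s / (8 * r / ε) ^ s := by
        rw [← Real.mul_rpow (by positivity) (by positivity), ← Real.div_rpow (by positivity)
          (by positivity)]
        congr 1; field_simp; ring
    _ ≤ coverNum d (F ∩ closedBall x (R / 2)) r := by
        rw [div_le_iff₀' (by positivity)]; exact key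
    _ ≤ coverNum d (closedBall x R ∩ F) r := by
        exact_mod_cast coverNum_mono (A := F ∩ closedBall x (R / 2)) (B := closedBall x R ∩ F)
          (fun q hq => ⟨closedBall_subset_closedBall (by linarith) hq.2, hq.1⟩)
          (isBounded_closedBall.subset inter_subset_left) hr

theorem stmt7_general (d : ℕ) (k : ℕ) (hk : 1 < k) (F : Set (Fin d → ℝ))
    (hne : F.Nonempty)
    (hP : ∀ x ∈ F, ∀ R : ℝ, 0 < R → R < 1 →
      ∃ y ∈ F ∩ closedBall x (R / 2), ∃ z ∈ F ∩ closedBall x (R / 2),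
        Disjoint (interior (closedBall y (R / 2 ^ k / 2)))
          (interior (closedBall z (R / 2 ^ k / 2)))) :
    1 / (k : ℝ) ≤ lowerDim d F := by
  have hk2 : (2 : ℝ) ≤ k := by exact_mod_cast hk
  refine le_lowerDim_of_forall_lt hne (by positivity) fun s hs0 hsk => ?_
  have hks : (k : ℝ) < 1 / s := by
    rwa [lt_div_iff₀ hs0, mul_comm, ← lt_div_iff₀ (by positivity)]
  refine (splitsAtRatio_of_disjoint_interior hP).coverNum_lower_bound ?_ hs0
    (hsk.le.trans (one_div_le_one_div_of_le two_pos hk2)) ?_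
  · calc (1 / 2 : ℝ) ^ k ≤ (1 / 2) ^ 2 := pow_le_pow_of_le_one (by norm_num) (by norm_num) hk
      _ = 1 / 4 := by norm_num
  · rw [← Real.rpow_natCast]
    exact Real.rpow_lt_rpow_of_exponent_gt (by norm_num) (by norm_num) hks

/-- If for every `x ∈ F` and `R ∈ (0,1)` the cube `Q(x,R)` contains two cubes of side
`2^{-k} R` with disjoint interiors centred at points of `F ∩ Q(x,R)`, then
`dim_L F ≥ 1/k`. -/
theorem stmt7 (d : ℕ) (k : ℕ) (hk : 1 < k) (F : Set (Fin d → ℝ))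
    (hF : IsCompact F) (hne : F.Nonempty)
    (hP : ∀ x ∈ F, ∀ R : ℝ, 0 < R → R < 1 →
      ∃ y ∈ F ∩ closedBall x (R / 2), ∃ z ∈ F ∩ closedBall x (R / 2),
        Disjoint (interior (closedBall y (R / 2 ^ k / 2)))
          (interior (closedBall z (R / 2 ^ k / 2)))) :
    1 / (k : ℝ) ≤ lowerDim d F :=
  stmt7_general d k hk F hne hP
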